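/- With the setup A = P ∪ ℓ₂ ∪ ℓ₃ and B = Q ∪ ℓ₁ ∪ ℓ₄ as above (ℓ₁: y = 1.6ε, ℓ₂: y = 0.8ε, ℓ₃: y = -0.8ε, ℓ₄: y = -1.6ε, P and Q on the x-axis): if T = (u, v) ∈ ℝ² is a translation with δ(A + T, B) < ε and v ≥ 0, then v ≤ 0.3ε, and consequently every point of P + T is strictly closer to Q than to ℓ₁ ∪ ℓ₄, so that sup_{p ∈ P} dist(p + T, Q) < ε. -/

import Mathlib

/-- The horizontal line at height c in the plane. -/
def horizLine (c : ℝ) : Set (ℝ × ℝ) := {p : ℝ × ℝ | p.2 = c}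

/-! Only heights matter, since the second coordinate is 1-Lipschitz on `ℝ × ℝ`. Both `A + T` and
`B` contain a horizontal line and have bounded height, so their Hausdorff distance is finite and
every point of either set has a partner in the other within `ε`. The partner of a point of `ℓ₄`
forces `v ≤ 0.3ε`: otherwise all of `A + T` lies above height `-0.8ε + v > -0.5ε`. A point of
`P + T` then sits at height `v ∈ [0, 0.3ε]`, at least `1.3ε` from `ℓ₁ ∪ ℓ₄`, so its partner lies
on `Q`. -/

open Metric

lemma mem_horizLine {c : ℝ} {p : ℝ × ℝ} : p ∈ horizLine c ↔ p.2 = c := Iff.rfl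

lemma image_add_horizLine (c : ℝ) (T : ℝ × ℝ) :
    (fun x => x + T) '' horizLine c = horizLine (c + T.2) := by
  ext p
  simp only [Set.image_add_right, Set.mem_preimage, mem_horizLine, Prod.snd_add, Prod.snd_neg]
  constructor <;> intro h <;> linarith

lemma abs_snd_sub_snd_le_dist (p q : ℝ × ℝ) : |p.2 - q.2| ≤ dist p q := by
  rw [Prod.dist_eq, ← Real.dist_eq]
  exact le_max_right _ _

lemma infEDist_le_of_horizLine_subset {s : Set (ℝ × ℝ)} {c : ℝ} (hs : horizLine c ⊆ s)
    (p : ℝ × ℝ) : infEDist p s ≤ ENNReal.ofReal |p.2 - c| :=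
  calc infEDist p s ≤ edist p (p.1, c) := infEDist_le_edist_of_mem (hs rfl)
    _ = ENNReal.ofReal |p.2 - c| := by rw [edist_dist, dist_prod_same_left, Real.dist_eq]

lemma hausdorffEDist_ne_top_of_horizLine_subset {s t : Set (ℝ × ℝ)} {a b M : ℝ}
    (ha : horizLine a ⊆ s) (hb : horizLine b ⊆ t)
    (hs : ∀ p ∈ s, |p.2| ≤ M) (ht : ∀ p ∈ t, |p.2| ≤ M) : hausdorffEDist s t ≠ ⊤ := by
  have bound {s' t' : Set (ℝ × ℝ)} {c : ℝ} (hc : horizLine c ⊆ t')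
      (hs' : ∀ p ∈ s', |p.2| ≤ M) (ht' : ∀ p ∈ t', |p.2| ≤ M) :
      ∀ p ∈ s', infEDist p t' ≤ ENNReal.ofReal (2 * M) := fun p hp =>
    (infEDist_le_of_horizLine_subset hc p).trans <| ENNReal.ofReal_le_ofReal <| by
      linarith [abs_sub p.2 c, hs' p hp, ht' (0, c) (hc rfl)]
  exact ne_top_of_le_ne_top ENNReal.ofReal_ne_top
    (hausdorffEDist_le_of_infEDist (bound hb hs ht) (bound ha ht hs))

lemma snd_eq_of_mem_image_add {S : Set ℝ} {a b : ℝ} {T p : ℝ × ℝ}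
    (hp : p ∈ (fun x => x + T) '' ((fun x => (x, (0 : ℝ))) '' S ∪ horizLine a ∪ horizLine b)) :
    p.2 = T.2 ∨ p.2 = a + T.2 ∨ p.2 = b + T.2 := by
  rw [Set.image_union, Set.image_union, image_add_horizLine, image_add_horizLine] at hp
  rcases hp with (⟨_, ⟨x, -, rfl⟩, rfl⟩ | hp) | hp
  · simp
  · exact Or.inr (Or.inl hp)
  · exact Or.inr (Or.inr hp)

lemma horizLine_subset_image_add {S : Set ℝ} {a b : ℝ} {T : ℝ × ℝ} :
    horizLine (a + T.2) ⊆
      (fun x => x + T) '' ((fun x => (x, (0 : ℝ))) '' S ∪ horizLine a ∪ horizLine b) := by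
  rw [← image_add_horizLine]
  exact Set.image_mono (Set.subset_union_right.trans Set.subset_union_left)

lemma hausdorffEDist_image_add_union_horizLine_ne_top (S R : Set ℝ) (a b c d : ℝ) (T : ℝ × ℝ) :
    hausdorffEDist
      ((fun x => x + T) '' ((fun x => (x, (0 : ℝ))) '' S ∪ horizLine a ∪ horizLine b))
      ((fun x => (x, (0 : ℝ))) '' R ∪ horizLine c ∪ horizLine d) ≠ ⊤ := by
  have := abs_nonneg a; have := abs_nonneg b; have := abs_nonneg c; have := abs_nonneg d
  have := abs_nonneg T.2
  refine hausdorffEDist_ne_top_of_horizLine_subset (M := |a| + |b| + |c| + |d| + |T.2|)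
    horizLine_subset_image_add (Set.subset_union_right.trans Set.subset_union_left)
    (fun p hp => ?_) (fun p hp => ?_)
  · rcases snd_eq_of_mem_image_add hp with h | h | h <;> rw [h]
    exacts [by linarith, by linarith [abs_add_le a T.2], by linarith [abs_add_le b T.2]]
  · rcases hp with (⟨x, -, rfl⟩ | h) | h
    · simp only [abs_zero]; linarith
    all_goals rw [mem_horizLine.1 h]; linarith

theorem hausdorff_reduction_backward_step_general (ε : ℝ)
    (P : Finset ℝ) (Q : Set ℝ)
    (A B : Set (ℝ × ℝ))
    (hAdef : A = (fun x => (x, (0 : ℝ))) '' ↑P ∪ horizLine (0.8 * ε) ∪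
                 horizLine (-0.8 * ε))
    (hBdef : B = (fun x => (x, (0 : ℝ))) '' Q ∪ horizLine (1.6 * ε) ∪
                 horizLine (-1.6 * ε))
    (u v : ℝ) (hv : 0 ≤ v)
    (h : Metric.hausdorffDist ((fun x => x + ((u, v) : ℝ × ℝ)) '' A) B < ε) :
    v ≤ 0.3 * ε ∧
    ∀ p ∈ P, Metric.infDist (((p, (0 : ℝ)) : ℝ × ℝ) + (u, v))
        ((fun x => (x, (0 : ℝ))) '' Q) < ε := by
  subst hAdef
  set A' := (fun x => x + ((u, v) : ℝ × ℝ)) '' _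
  have hA' (a : ℝ × ℝ) (ha : a ∈ A') : a.2 = v ∨ a.2 = 0.8 * ε + v ∨ a.2 = -0.8 * ε + v :=
    snd_eq_of_mem_image_add ha
  have hB (b : ℝ × ℝ) (hb : b ∈ B) :
      b ∈ (fun x => (x, (0 : ℝ))) '' Q ∨ b.2 = 1.6 * ε ∨ b.2 = -1.6 * ε := by
    rw [hBdef] at hb; exact or_assoc.1 hb
  have hfin : hausdorffEDist A' B ≠ ⊤ :=
    hBdef ▸ hausdorffEDist_image_add_union_horizLine_ne_top _ _ _ _ _ _ _
  have hv3 : v ≤ 0.3 * ε := by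
    by_contra! hgt
    have hℓ₄ : ((0 : ℝ), -1.6 * ε) ∈ B := hBdef ▸ Set.mem_union_right _ rfl
    obtain ⟨a, ha, hdist⟩ := exists_dist_lt_of_hausdorffDist_lt' hℓ₄ h hfin
    have := abs_lt.1 ((abs_snd_sub_snd_le_dist a _).trans_lt hdist)
    rcases hA' a ha with ha | ha | ha <;> rw [ha] at this <;> linarith [this.1, this.2]
  refine ⟨hv3, fun p hp => ?_⟩
  have hpT : (p, (0 : ℝ)) + (u, v) ∈ A' :=
    Set.mem_image_of_mem _ (Set.mem_union_left _ (Set.mem_union_left _ ⟨p, hp, rfl⟩))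
  obtain ⟨b, hb, hdist⟩ := exists_dist_lt_of_hausdorffDist_lt hpT h hfin
  have := abs_lt.1 ((abs_snd_sub_snd_le_dist _ b).trans_lt hdist)
  rcases hB b hb with hq | hb | hb
  · exact (infDist_le_dist_of_mem hq).trans_lt hdist
  all_goals simp only [Prod.snd_add, zero_add, hb] at this; linarith [this.1, this.2]

/-- If a translation T = (u,v) with v ≥ 0 achieves Hausdorff distance < ε
between the augmented sets, then v ≤ 0.3ε and every translated point of P is
within distance < ε of Q. -/
theorem hausdorff_reduction_backward_step (ε : ℝ) (hε : 0 < ε)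
    (P : Finset ℝ) (Q : Set ℝ) (hQne : Q.Nonempty)
    (hQ : ∃ s : Finset (ℝ × ℝ), Q = ⋃ pq ∈ s, Set.Icc pq.1 pq.2)
    (hP01 : ∀ p ∈ P, p ∈ Set.Icc (0 : ℝ) 1) (hQ01 : Q ⊆ Set.Icc 0 1)
    (A B : Set (ℝ × ℝ))
    (hAdef : A = (fun x => (x, (0 : ℝ))) '' ↑P ∪ horizLine (0.8 * ε) ∪
                 horizLine (-0.8 * ε))
    (hBdef : B = (fun x => (x, (0 : ℝ))) '' Q ∪ horizLine (1.6 * ε) ∪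
                 horizLine (-1.6 * ε))
    (u v : ℝ) (hv : 0 ≤ v)
    (h : Metric.hausdorffDist ((fun x => x + ((u, v) : ℝ × ℝ)) '' A) B < ε) :
    v ≤ 0.3 * ε ∧
    ∀ p ∈ P, Metric.infDist (((p, (0 : ℝ)) : ℝ × ℝ) + (u, v))
        ((fun x => (x, (0 : ℝ))) '' Q) < ε :=
  hausdorff_reduction_backward_step_general ε P Q A B hAdef hBdef u v hv h
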